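/- (Alpers–Tijdeman: switching components are PTE₂ solutions) Let m ∈ ℕ, let 𝓛 be a set of m + 1 pairwise distinct lattice lines in ℝ², and let X, Y ⊆ ℤ² be distinct finite sets that are tomographically equivalent with respect to 𝓛. Then for all nonnegative integers i, j with i + j ≤ m, Σ_{(x₁,x₂) ∈ X} x₁^i · x₂^j = Σ_{(y₁,y₂) ∈ Y} y₁^i · y₂^j; i.e., (X, Y) is a degree-m solution of the two-dimensional Prouhet–Tarry–Escott problem PTE₂. -/

import Mathlib

/-!
For a lattice direction `v`, the X-ray parallel to `v` determines the multiset of values of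
the linear form `x ↦ v₀x₁ - v₁x₀` on a finite set, hence all its power sums. Expanding
`(v₀x₁ - v₁x₀)ⁿ` binomially, the difference of the `n`-th power sums over `X` and `Y` is the
binary form of degree `n` with coefficients `C(n,k) (μₖ(X) - μₖ(Y))`, evaluated at
`(-v₁, v₀)`, where `μₖ` is the mixed moment `∑ x₀ᵏ x₁ⁿ⁻ᵏ`. For `n ≤ m` this form vanishes at
the `m + 1` pairwise non-proportional directions of `𝓛`, so it is zero: all moments of
degree `n` agree.
-/

open Set

variable {d : ℕ}

/-- The affine line through the coset `T` of the modulo-`S` quotient, i.e. an affine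
line parallel to `S` when `S` is 1-dimensional. -/
def fiber (S : Submodule ℝ (Fin d → ℝ)) (T : (Fin d → ℝ) ⧸ S) : Set (Fin d → ℝ) :=
  {x | (Submodule.Quotient.mk x : (Fin d → ℝ) ⧸ S) = T}

/-- `F₁` and `F₂` have the same (discrete) X-ray parallel to `S`. -/
def XrayEq (S : Submodule ℝ (Fin d → ℝ)) (F₁ F₂ : Set (Fin d → ℝ)) : Prop :=
  ∀ T : (Fin d → ℝ) ⧸ S, (F₁ ∩ fiber S T).ncard = (F₂ ∩ fiber S T).ncard

/-- `F₁` and `F₂` are tomographically equivalent w.r.t. the family `𝒮` of lines. -/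
def TomEq (𝒮 : Set (Submodule ℝ (Fin d → ℝ))) (F₁ F₂ : Set (Fin d → ℝ)) : Prop :=
  ∀ S ∈ 𝒮, XrayEq S F₁ F₂

/-- A lattice line: a line through the origin spanned by a nonzero integer vector. -/
def IsLatticeLine (S : Submodule ℝ (Fin d → ℝ)) : Prop :=
  ∃ v : Fin d → ℤ, v ≠ 0 ∧ S = Submodule.span ℝ {fun i => (v i : ℝ)}

/-- The canonical embedding of `ℤ^d` into `ℝ^d`. -/
def embed (x : Fin d → ℤ) : Fin d → ℝ := fun i => (x i : ℝ)

/-- The X-ray difference `Δ_𝒮(F₁,F₂)`. -/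
noncomputable def xrayDiff (𝒮 : Set (Submodule ℝ (Fin d → ℝ))) (F₁ F₂ : Set (Fin d → ℝ)) : ℕ :=
  ∑ᶠ S ∈ 𝒮, ∑ᶠ T : (Fin d → ℝ) ⧸ S,
    (((F₁ ∩ fiber S T).ncard : ℤ) - ((F₂ ∩ fiber S T).ncard : ℤ)).natAbs

/-- A convex lattice set: `F = conv(F) ∩ ℤ^d`. -/
def IsConvexLatticeSet (F : Finset (Fin d → ℤ)) : Prop :=
  embed '' ↑F = convexHull ℝ (embed '' ↑F) ∩ Set.range (embed : (Fin d → ℤ) → (Fin d → ℝ))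

theorem XrayEq.map_mkQ_eq {S : Submodule ℝ (Fin d → ℝ)} {A B : Finset (Fin d → ℝ)}
    (h : XrayEq S ↑A ↑B) : A.val.map S.mkQ = B.val.map S.mkQ := by
  classical
  ext T
  have hfiber : ∀ C : Finset (Fin d → ℝ), ↑C ∩ fiber S T = ↑(C.filter (T = S.mkQ ·)) := by
    intro C
    ext x
    simp only [fiber, Set.mem_inter_iff, Finset.coe_filter, Set.mem_ofPred_eq, Finset.mem_coe]
    exact and_congr_right fun _ => eq_comm
  have hT := h T
  rw [hfiber, hfiber, Set.ncard_coe_finset, Set.ncard_coe_finset] at hT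
  simpa only [Multiset.count_map, Finset.card_def, Finset.filter_val] using hT

theorem XrayEq.map_eq_of_le_ker {S : Submodule ℝ (Fin d → ℝ)} {A B : Finset (Fin d → ℝ)}
    (h : XrayEq S ↑A ↑B) {W : Type*} [AddCommGroup W] [Module ℝ W] {φ : (Fin d → ℝ) →ₗ[ℝ] W}
    (hφ : S ≤ LinearMap.ker φ) : A.val.map φ = B.val.map φ := by
  rw [← S.liftQ_mkQ φ hφ, LinearMap.coe_comp, ← Multiset.map_map, ← Multiset.map_map,
    h.map_mkQ_eq]

theorem embed_injective : Function.Injective (embed (d := d)) :=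
  fun _ _ h => funext fun i => Int.cast_injective (congrFun h i)

theorem embed_ne_zero {v : Fin d → ℤ} (hv : v ≠ 0) : embed v ≠ 0 := fun h =>
  hv (embed_injective (h.trans (funext fun _ => Int.cast_zero.symm)))

section Wedge

variable {R : Type*} [CommRing R]

def wedge (v : Fin 2 → R) : (Fin 2 → R) →ₗ[R] R :=
  v 0 • LinearMap.proj 1 - v 1 • LinearMap.proj 0

@[simp]
theorem wedge_apply (v x : Fin 2 → R) : wedge v x = v 0 * x 1 - v 1 * x 0 := rfl

theorem span_le_ker_wedge (v : Fin 2 → R) : R ∙ v ≤ LinearMap.ker (wedge v) :=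
  (Submodule.span_singleton_le_iff_mem _ _).2 (by simp [mul_comm])

end Wedge

theorem wedge_embed (v x : Fin 2 → ℤ) : wedge (embed v) (embed x) = (wedge v x : ℝ) := by
  simp [embed]

theorem mem_span_singleton_of_wedge_eq_zero {K : Type*} [Field K] {v x : Fin 2 → K}
    (hv : v ≠ 0) (h : wedge v x = 0) : x ∈ K ∙ v := by
  rw [wedge_apply] at h
  rw [Submodule.mem_span_singleton]
  by_cases hv0 : v 0 = 0
  · have hv1 : v 1 ≠ 0 := fun hv1 => hv (funext fun i => by fin_cases i <;> assumption)
    refine ⟨x 1 / v 1, funext fun i => ?_⟩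
    fin_cases i
    · have hx0 : x 0 = 0 := by simpa [hv0, hv1] using h
      simp [hv0, hx0]
    · simp [hv1]
  · refine ⟨x 0 / v 0, funext fun i => ?_⟩
    fin_cases i
    · simp [hv0]
    · simp only [Fin.mk_one, Fin.isValue, Pi.smul_apply, smul_eq_mul]
      field_simp
      linear_combination -h

theorem span_embed_eq_of_wedge_eq_zero {v w : Fin 2 → ℤ} (hv : v ≠ 0) (hw : w ≠ 0)
    (h : wedge v w = 0) : ℝ ∙ embed v = ℝ ∙ embed w := by
  have h' : wedge w v = 0 := by
    simp only [wedge_apply] at h ⊢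
    linear_combination -h
  apply le_antisymm <;> rw [Submodule.span_singleton_le_iff_mem]
  · exact mem_span_singleton_of_wedge_eq_zero (embed_ne_zero hw)
      (by rw [wedge_embed, h', Int.cast_zero])
  · exact mem_span_singleton_of_wedge_eq_zero (embed_ne_zero hv)
      (by rw [wedge_embed, h, Int.cast_zero])

theorem XrayEq.map_wedge_eq {v : Fin 2 → ℤ} {X Y : Finset (Fin 2 → ℤ)}
    (h : XrayEq (ℝ ∙ embed v) (embed '' ↑X) (embed '' ↑Y)) :
    X.val.map (wedge v) = Y.val.map (wedge v) := by
  have h' : XrayEq (ℝ ∙ embed v) ↑(X.map ⟨embed, embed_injective⟩)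
      ↑(Y.map ⟨embed, embed_injective⟩) := by
    rw [Finset.coe_map, Finset.coe_map]
    exact h
  have := h'.map_eq_of_le_ker (span_le_ker_wedge (embed v))
  apply Multiset.map_injective (Int.cast_injective (α := ℝ))
  simpa only [Finset.map_val, Multiset.map_map, Function.comp_def,
    Function.Embedding.coeFn_mk, wedge_embed] using this

theorem XrayEq.sum_comp_wedge_eq {v : Fin 2 → ℤ} {X Y : Finset (Fin 2 → ℤ)}
    (h : XrayEq (ℝ ∙ embed v) (embed '' ↑X) (embed '' ↑Y)) {M : Type*} [AddCommMonoid M]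
    (f : ℤ → M) : ∑ x ∈ X, f (wedge v x) = ∑ y ∈ Y, f (wedge v y) := by
  rw [Finset.sum_eq_multiset_sum, Finset.sum_eq_multiset_sum]
  simpa only [Multiset.map_map, Function.comp_def] using
    congrArg (fun s => (s.map f).sum) h.map_wedge_eq

section BinaryForm

open Polynomial

variable {R K ι : Type*} [CommSemiring R] [Field K]

def binaryForm (n : ℕ) (c : ℕ → R) (a b : R) : R :=
  ∑ k ∈ Finset.range (n + 1), c k * a ^ k * b ^ (n - k)

theorem sum_add_mul_pow_eq_binaryForm {α : Type*} (s : Finset α) (f g : α → R) (a b : R)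
    (n : ℕ) : ∑ x ∈ s, (a * f x + b * g x) ^ n =
      binaryForm n (fun k => n.choose k * ∑ x ∈ s, f x ^ k * g x ^ (n - k)) a b := by
  simp only [add_pow, binaryForm]
  rw [Finset.sum_comm]
  refine Finset.sum_congr rfl fun k _ => ?_
  rw [Finset.mul_sum, Finset.sum_mul, Finset.sum_mul]
  exact Finset.sum_congr rfl fun x _ => by ring

theorem binaryForm_zero_right (n : ℕ) (c : ℕ → R) (a : R) :
    binaryForm n c a 0 = c n * a ^ n := by
  rw [binaryForm, Finset.sum_range_succ, Nat.sub_self, pow_zero, mul_one,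
    Finset.sum_eq_zero fun k hk => ?_, zero_add]
  rw [zero_pow (by grind), mul_zero]

theorem binaryForm_eq_pow_mul_eval (n : ℕ) (c : ℕ → K) (a : K) {b : K} (hb : b ≠ 0) :
    binaryForm n c a b =
      b ^ n * (∑ k ∈ Finset.range (n + 1), monomial k (c k)).eval (a / b) := by
  rw [binaryForm, eval_finsetSum, Finset.mul_sum]
  refine Finset.sum_congr rfl fun k hk => ?_
  rw [eval_monomial, div_pow, ← Nat.sub_add_cancel (Finset.mem_range_succ_iff.1 hk), pow_add]
  field_simp
  simp

theorem coeff_sum_monomial_range (n : ℕ) (c : ℕ → K) (k : ℕ) :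
    (∑ j ∈ Finset.range (n + 1), monomial j (c j)).coeff k = if k ≤ n then c k else 0 := by
  simp [coeff_monomial]

theorem card_le_card_filter_ne_zero_add_one {P : Finset ι} {a b : ι → K}
    [DecidablePred (b · = 0)] (hinj : ∀ i ∈ P, ∀ j ∈ P, a i * b j = b i * a j → i = j) :
    P.card ≤ (P.filter (¬b · = 0)).card + 1 := by
  have hvert : (P.filter (b · = 0)).card ≤ 1 := Finset.card_le_one.2 fun i hi j hj => by
    simp only [Finset.mem_filter] at hi hj
    exact hinj i hi.1 j hj.1 (by rw [hi.2, hj.2, mul_zero, zero_mul])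
  have := Finset.card_filter_add_card_filter_not (s := P) (b · = 0)
  omega

open Classical in
theorem binaryForm_coeff_eq_zero {n : ℕ} {c : ℕ → K} {P : Finset ι} {a b : ι → K}
    (hne : ∀ i ∈ P, a i ≠ 0 ∨ b i ≠ 0)
    (hinj : ∀ i ∈ P, ∀ j ∈ P, a i * b j = b i * a j → i = j) (hcard : n < P.card)
    (hvan : ∀ i ∈ P, binaryForm n c (a i) (b i) = 0) {k : ℕ} (hk : k ≤ n) : c k = 0 := by
  set p : K[X] := ∑ j ∈ Finset.range (n + 1), monomial j (c j) with hp
  suffices p = 0 by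
    have hck := coeff_sum_monomial_range n c k
    rwa [← hp, this, coeff_zero, if_pos hk, eq_comm] at hck
  set P' := P.filter (¬b · = 0)
  have hP' : P.card ≤ P'.card + 1 := card_le_card_filter_ne_zero_add_one hinj
  set roots := P'.image (fun i => a i / b i)
  have hroots : roots.card = P'.card := Finset.card_image_of_injOn fun i hi j hj hij => by
    simp only [Finset.coe_filter, Set.mem_ofPred_eq, P'] at hi hj
    rw [div_eq_div_iff hi.2 hj.2] at hij
    exact hinj i hi.1 j hj.1 (by linear_combination hij)
  have heval : ∀ r ∈ roots, p.eval r = 0 := by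
    simp only [roots, P', Finset.mem_image, Finset.mem_filter]
    rintro _ ⟨i, ⟨hi, hbi⟩, rfl⟩
    have := hvan i hi
    rw [binaryForm_eq_pow_mul_eval n c _ hbi] at this
    exact (mul_eq_zero.1 this).resolve_left (pow_ne_zero n hbi)
  refine eq_zero_of_degree_lt_of_eval_finset_eq_zero roots ?_ heval
  rw [degree_lt_iff_coeff_zero]
  intro j hj
  rw [coeff_sum_monomial_range]
  split_ifs with hjn
  · obtain rfl : j = n := by omega
    -- fewer than `n + 1` roots: some point has `b i = 0`, and there the form is `c n * a i ^ n`
    obtain ⟨i, hi, hbi⟩ : ∃ i ∈ P, b i = 0 := by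
      by_contra! hall
      rw [show P' = P from Finset.filter_true_of_mem hall] at hroots
      omega
    have := hvan i hi
    rw [hbi, binaryForm_zero_right] at this
    have hai : a i ≠ 0 := (hne i hi).resolve_right (not_not.2 hbi)
    exact (mul_eq_zero.1 this).resolve_right (pow_ne_zero j hai)
  · rfl

@[simp, norm_cast]
theorem Int.cast_binaryForm {R : Type*} [CommRing R] (n : ℕ) (c : ℕ → ℤ) (a b : ℤ) :
    ((binaryForm n c a b : ℤ) : R) = binaryForm n (fun k => (c k : R)) a b := by
  simp [binaryForm]

end BinaryForm

def moment (X : Finset (Fin 2 → ℤ)) (k l : ℕ) : ℤ := ∑ x ∈ X, x 0 ^ k * x 1 ^ l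

theorem XrayEq.binaryForm_moment_sub_eq_zero {v : Fin 2 → ℤ} {X Y : Finset (Fin 2 → ℤ)}
    (h : XrayEq (ℝ ∙ embed v) (embed '' ↑X) (embed '' ↑Y)) (n : ℕ) :
    binaryForm n (fun k => n.choose k * (moment X k (n - k) - moment Y k (n - k)))
      (-v 1) (v 0) = 0 := by
  have hwedge : ∀ x : Fin 2 → ℤ, wedge v x = -v 1 * x 0 + v 0 * x 1 := fun x => by
    rw [wedge_apply]; ring
  have hpow := h.sum_comp_wedge_eq (· ^ n)
  simp only [hwedge, sum_add_mul_pow_eq_binaryForm] at hpow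
  simpa only [binaryForm, moment, mul_sub, sub_mul, Finset.sum_sub_distrib, sub_eq_zero]
    using hpow

theorem switching_components_are_pte2_solutions_general
    (m : ℕ) (𝓛 : Finset (Submodule ℝ (Fin 2 → ℝ))) (hcard : 𝓛.card = m + 1)
    (h𝓛 : ∀ S ∈ 𝓛, IsLatticeLine S)
    (X Y : Finset (Fin 2 → ℤ))
    (h : TomEq (↑𝓛 : Set (Submodule ℝ (Fin 2 → ℝ))) (embed '' ↑X) (embed '' ↑Y)) :
    ∀ i j : ℕ, i + j ≤ m →
      ∑ x ∈ X, (x 0) ^ i * (x 1) ^ j = ∑ y ∈ Y, (y 0) ^ i * (y 1) ^ j := by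
  intro i j hij
  choose! v hv hvS using h𝓛
  have hform (S) (hS : S ∈ 𝓛) := (hvS S hS ▸ h S hS :
    XrayEq (ℝ ∙ embed (v S)) _ _).binaryForm_moment_sub_eq_zero (i + j)
  have hne (S) (hS : S ∈ 𝓛) : ((-v S 1 : ℤ) : ℚ) ≠ 0 ∨ ((v S 0 : ℤ) : ℚ) ≠ 0 := by
    obtain ⟨k, hk⟩ := Function.ne_iff.1 (hv S hS)
    fin_cases k
    · exact Or.inr (by simpa using hk)
    · exact Or.inl (by simpa using hk)
  have hinj (S) (hS : S ∈ 𝓛) (S') (hS' : S' ∈ 𝓛)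
      (hSS' : ((-v S 1 : ℤ) : ℚ) * (v S' 0 : ℤ) = (v S 0 : ℤ) * ((-v S' 1 : ℤ) : ℚ)) :
      S = S' := by
    rw [hvS S hS, hvS S' hS']
    refine span_embed_eq_of_wedge_eq_zero (hv S hS) (hv S' hS') ?_
    rw [wedge_apply]
    have hSS'ℤ : -v S 1 * v S' 0 = v S 0 * -v S' 1 := by exact_mod_cast hSS'
    linear_combination hSS'ℤ
  have hci := binaryForm_coeff_eq_zero hne hinj (by omega)
    (fun S hS => by rw [← Int.cast_binaryForm, hform S hS, Int.cast_zero])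
    (Nat.le_add_right i j)
  simp only [Int.cast_eq_zero, mul_eq_zero, Nat.cast_eq_zero,
    Nat.choose_eq_zero_iff, Nat.add_sub_cancel_left, sub_eq_zero] at hci
  exact hci.resolve_left (by omega)

theorem switching_components_are_pte2_solutions
    (m : ℕ) (𝓛 : Finset (Submodule ℝ (Fin 2 → ℝ))) (hcard : 𝓛.card = m + 1)
    (h𝓛 : ∀ S ∈ 𝓛, IsLatticeLine S)
    (X Y : Finset (Fin 2 → ℤ)) (hXY : X ≠ Y)
    (h : TomEq (↑𝓛 : Set (Submodule ℝ (Fin 2 → ℝ))) (embed '' ↑X) (embed '' ↑Y)) :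
    ∀ i j : ℕ, i + j ≤ m →
      ∑ x ∈ X, (x 0) ^ i * (x 1) ^ j = ∑ y ∈ Y, (y 0) ^ i * (y 1) ^ j :=
  switching_components_are_pte2_solutions_general m 𝓛 hcard h𝓛 X Y h
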